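/- Let n ≥ 2, set ω = exp(2πi/n), let N ≥ 2, and let η_1, …, η_{2N} be elements of an associative unital ℂ-algebra, indexed cyclically mod 2N, satisfying η_j η_{j+1} = ω η_{j+1} η_j for all j, η_j η_k = η_k η_j whenever k ≢ j±1 (mod 2N), and η_j^n = 1 for all j. Define A₀ = Σ_{j=1}^{N} Σ_{k=1}^{n−1} η_{2j−1}^k / (1 − ω^{−k}) and A₁ = Σ_{j=1}^{N} Σ_{k=1}^{n−1} η_{2j}^k / (1 − ω^{−k}). Then A₀ and A₁ satisfy the Dolan–Grady condition with constant C = n², i.e. [A₀,[A₀,[A₀,A₁]]] = n²·[A₀,A₁] and [A₁,[A₁,[A₁,A₀]]] = n²·[A₁,A₀]. -/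

import Mathlib

/-!
Write `f(z) = ∑_{k=1}^{n-1} z^k / (1 - ω^{-k})`. In `A₀ = ∑ f(η_odd)` only the two neighbours
`x = η_{t-1}`, `x' = η_{t+1}` of an even site `t` fail to commute with `y = η_t`, and the remaining
terms commute with everything in sight, so on `f(y)` the iterated brackets with `A₀` are those with
`f(x) + f(x')`. Decomposing `y^l` along the spectral projections `E_m(x)`, `E_j(x')` of the order
`n` elements `x, x'`, every piece `E_m(x) y^l E_j(x')` is an eigenvector of `⁅f(x) + f(x'), ·⁆`,
with eigenvalue `n ([m < l] - [j < l]) ∈ {0, ±n}` because `f(ω^m) - f(ω^{m-l}) = n [m < l] - l`.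
Each eigenvalue satisfies `ν³ = n² ν`, which is the Dolan–Grady relation with `C = n²`.
-/

open Finset

section

-- Mathlib keeps the commutator Lie ring structure of an associative ring local.
attribute [local instance] LieRing.ofAssociativeRing

def DolanGradyRel {R A : Type*} [CommRing R] [Ring A] [Algebra R A] (C : R) (a b : A) : Prop :=
  ⁅a, ⁅a, ⁅a, b⁆⁆⁆ = C • ⁅a, b⁆

namespace DolanGradyRel

variable {R A : Type*} [CommRing R] [Ring A] [Algebra R A] {C : R} {a b : A}

theorem of_lie_eq_smul {ν : R} (hb : ⁅a, b⁆ = ν • b) (hν : ν ^ 3 = C * ν) :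
    DolanGradyRel C a b := by
  rw [DolanGradyRel, hb, lie_smul ν a b, hb, lie_smul ν a _, lie_smul ν a b, hb, smul_smul,
    smul_smul, smul_smul, ← hν, pow_three, mul_assoc]

theorem smul (h : DolanGradyRel C a b) (c : R) : DolanGradyRel C a (c • b) := by
  rw [DolanGradyRel, lie_smul c a b, lie_smul c a _, lie_smul c a _, h, smul_comm]

theorem sum {ι : Type*} {s : Finset ι} {b : ι → A} (h : ∀ i ∈ s, DolanGradyRel C a (b i)) :
    DolanGradyRel C a (∑ i ∈ s, b i) := by
  simp only [DolanGradyRel, lie_sum, smul_sum]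
  exact sum_congr rfl h

theorem add_left_of_commute {r : A} (hra : Commute r a) (hrb : Commute r b)
    (h : DolanGradyRel C a b) : DolanGradyRel C (a + r) b := by
  have hlie : ∀ {v}, Commute r v → ⁅a + r, v⁆ = ⁅a, v⁆ := fun hv => by
    rw [add_lie, commute_iff_lie_eq.1 hv, add_zero]
  have hr_lie : ∀ {v}, Commute r v → Commute r ⁅a, v⁆ := fun hv => by
    rw [Ring.lie_def]; exact (hra.mul_right hv).sub_right (hv.mul_right hra)
  rw [DolanGradyRel, hlie hrb, hlie (hr_lie hrb), hlie (hr_lie (hr_lie hrb))]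
  exact h

theorem sum_of_commute {ι : Type*} [DecidableEq ι] {s : Finset ι} {g : ι → A} {i j : ι}
    (hi : i ∈ s) (hj : j ∈ s) (hij : i ≠ j) (hg : ∀ k ∈ s, ∀ k' ∈ s, Commute (g k) (g k'))
    (hb : ∀ k ∈ s, k ≠ i → k ≠ j → Commute (g k) b) (h : DolanGradyRel C (g i + g j) b) :
    DolanGradyRel C (∑ k ∈ s, g k) b := by
  have hj' : j ∈ s.erase i := mem_erase.2 ⟨hij.symm, hj⟩
  rw [← add_sum_erase s g hi, ← add_sum_erase _ g hj', ← add_assoc]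
  refine h.add_left_of_commute ?_ (Commute.sum_left _ _ _ fun k hk => ?_)
  · refine Commute.sum_left _ _ _ fun k hk => ?_
    obtain ⟨-, -, hks⟩ := by simpa only [mem_erase] using hk
    exact (hg k hks i hi).add_right (hg k hks j hj)
  · obtain ⟨hkj, hki, hks⟩ := by simpa only [mem_erase] using hk
    exact hb k hks hki hkj

end DolanGradyRel

section TwistedCommutation

variable {R A : Type*} [CommSemiring R] [Semiring A] [Algebra R A] {x y : A} {c : R}

theorem mul_pow_eq_smul_pow_mul (h : x * y = c • (y * x)) (l : ℕ) :
    x * y ^ l = c ^ l • (y ^ l * x) := by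
  induction l with
  | zero => simp
  | succ l ih =>
    rw [pow_succ, ← mul_assoc, ih, smul_mul_assoc, mul_assoc, h, mul_smul_comm, smul_smul,
      ← mul_assoc, pow_succ]

theorem pow_mul_eq_smul_mul_pow (h : x * y = c • (y * x)) (l : ℕ) :
    x ^ l * y = c ^ l • (y * x ^ l) := by
  induction l with
  | zero => simp
  | succ l ih =>
    rw [pow_succ', mul_assoc, ih, mul_smul_comm, ← mul_assoc, h, smul_mul_assoc, smul_smul,
      mul_assoc, pow_succ', mul_comm]

theorem pow_mul_eq_smul_of_mul_eq_smul {a : R} (h : x * y = a • y) (k : ℕ) :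
    x ^ k * y = a ^ k • y := by
  induction k with
  | zero => simp
  | succ k ih => rw [pow_succ', mul_assoc, ih, mul_smul_comm, h, smul_smul, pow_succ]

theorem mul_pow_eq_smul_of_mul_eq_smul {a : R} (h : y * x = a • y) (k : ℕ) :
    y * x ^ k = a ^ k • y := by
  induction k with
  | zero => simp
  | succ k ih => rw [pow_succ, ← mul_assoc, ih, smul_mul_assoc, h, smul_smul, pow_succ]

end TwistedCommutation

namespace IsPrimitiveRoot

variable {K : Type*} [Field K] {n : ℕ} {ω : K}

theorem sum_range_pow_mul_inv_pow (hω : IsPrimitiveRoot ω n) {i j : ℕ} (hi : i < n) (hj : j < n) :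
    ∑ k ∈ range n, (ω ^ i * (ω ^ j)⁻¹) ^ k = if i = j then (n : K) else 0 := by
  have hω0 : ω ≠ 0 := hω.ne_zero (by omega)
  split_ifs with hij
  · simp [hij, pow_ne_zero j hω0]
  · have hne : ω ^ i * (ω ^ j)⁻¹ ≠ 1 := by
      rw [Ne, mul_inv_eq_one₀ (pow_ne_zero j hω0)]
      exact fun h => hij (hω.pow_inj hi hj h)
    have hpow : (ω ^ i * (ω ^ j)⁻¹) ^ n = 1 := by
      rw [mul_pow, inv_pow, ← pow_mul, ← pow_mul, mul_comm i, mul_comm j, pow_mul, pow_mul,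
        hω.pow_eq_one, one_pow, one_pow, inv_one, one_mul]
    rw [geom_sum_eq hne, hpow, sub_self, zero_div]

theorem sum_Icc_pow_mul_inv_pow (hω : IsPrimitiveRoot ω n) {i j : ℕ} (hi : i < n) (hj : j < n) :
    ∑ k ∈ Icc 1 (n - 1), (ω ^ i * (ω ^ j)⁻¹) ^ k = (if i = j then (n : K) else 0) - 1 := by
  have hIcc : Icc 1 (n - 1) = (range n).erase 0 := by
    ext k; simp only [mem_Icc, mem_erase, mem_range]; omega
  rw [hIcc, sum_erase_eq_sub (mem_range.2 (by omega)), hω.sum_range_pow_mul_inv_pow hi hj,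
    pow_zero]

end IsPrimitiveRoot

variable {K A : Type*} [Field K] [Ring A] [Algebra K A] {n : ℕ} {ω : K}

noncomputable def chiralPotts (ω : K) (n : ℕ) (z : A) : A :=
  ∑ k ∈ Icc 1 (n - 1), (1 - (ω ^ k)⁻¹)⁻¹ • z ^ k

theorem IsPrimitiveRoot.chiralPotts_sub (hω : IsPrimitiveRoot ω n) {m l : ℕ} (hm : m < n)
    (hl : l ≤ n) :
    chiralPotts ω n (ω ^ m) - chiralPotts ω n (ω ^ m * (ω ^ l)⁻¹) =
      (if m < l then (n : K) else 0) - l := by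
  -- With `r = ω⁻ᵏ`, `(1 - rˡ) / (1 - r) = ∑_{p < l} rᵖ`; after swapping the sums, the sum over
  -- `k` kills every `p` except `p = m`.
  have hterm : ∀ k ∈ Icc 1 (n - 1),
      (1 - (ω ^ k)⁻¹)⁻¹ • (ω ^ m) ^ k - (1 - (ω ^ k)⁻¹)⁻¹ • (ω ^ m * (ω ^ l)⁻¹) ^ k =
        ∑ p ∈ range l, (ω ^ m * (ω ^ p)⁻¹) ^ k := by
    intro k hk
    have hr : (ω ^ k)⁻¹ ≠ 1 := inv_ne_one.2 <|
      hω.pow_ne_one_of_pos_of_lt (by grind) (by grind)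
    have hpow (p : ℕ) : (ω ^ m * (ω ^ p)⁻¹) ^ k = (ω ^ m) ^ k * ((ω ^ k)⁻¹) ^ p := by
      rw [mul_pow, inv_pow, inv_pow, ← pow_mul, ← pow_mul, ← pow_mul, mul_comm p k]
    simp only [hpow, ← mul_sum, geom_sum_eq hr, smul_eq_mul]
    generalize (ω ^ k)⁻¹ = r at hr ⊢
    have h1 : 1 - r ≠ 0 := sub_ne_zero.2 hr.symm
    have h2 : r - 1 ≠ 0 := sub_ne_zero.2 hr
    field_simp
    ring
  rw [chiralPotts, chiralPotts, ← sum_sub_distrib, sum_congr rfl hterm, sum_comm,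
    sum_congr rfl fun p hp => hω.sum_Icc_pow_mul_inv_pow hm (by grind), sum_sub_distrib,
    sum_ite_eq, sum_const, card_range]
  simp only [mem_range, nsmul_eq_mul, mul_one]

theorem lie_chiralPotts_eq_smul {z P : A} {a b : K} (ha : z * P = a • P) (hb : P * z = b • P) :
    ⁅chiralPotts ω n z, P⁆ = (chiralPotts ω n a - chiralPotts ω n b) • P := by
  simp only [chiralPotts, Ring.lie_def, sum_mul, mul_sum, smul_mul_assoc, mul_smul_comm,
    pow_mul_eq_smul_of_mul_eq_smul ha, mul_pow_eq_smul_of_mul_eq_smul hb, smul_smul, smul_eq_mul,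
    ← sum_sub_distrib, ← sub_smul, sum_smul]

theorem Commute.chiralPotts {z w : A} (h : Commute z w) :
    Commute (chiralPotts ω n z) (chiralPotts ω n w) :=
  Commute.sum_left _ _ _ fun _ _ => Commute.sum_right _ _ _ fun _ _ =>
    ((h.pow_pow _ _).smul_left _).smul_right _

noncomputable def spectralProj (ω : K) (n : ℕ) (z : A) (m : ℕ) : A :=
  (n : K)⁻¹ • ∑ k ∈ range n, ((ω ^ m)⁻¹ • z) ^ k

theorem Commute.spectralProj_right {w z : A} (h : Commute w z) (m : ℕ) :
    Commute w (spectralProj ω n z m) :=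
  (Commute.sum_right _ _ _ fun k _ => ((h.smul_right _).pow_right k)).smul_right _

theorem mul_spectralProj (hω : IsPrimitiveRoot ω n) (hn : n ≠ 0) {z : A} (hz : z ^ n = 1)
    (m : ℕ) : z * spectralProj ω n z m = ω ^ m • spectralProj ω n z m := by
  have hω0 : ω ^ m ≠ 0 := pow_ne_zero m (hω.ne_zero hn)
  obtain ⟨w, rfl⟩ : ∃ w, z = ω ^ m • w := ⟨(ω ^ m)⁻¹ • z, (smul_inv_smul₀ hω0 z).symm⟩
  have hw : w ^ n = 1 := by
    rwa [smul_pow, ← pow_mul, mul_comm, pow_mul, hω.pow_eq_one, one_pow, one_smul] at hz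
  have hgeom : w * ∑ k ∈ range n, w ^ k = ∑ k ∈ range n, w ^ k := by
    rw [← sub_eq_zero, ← sub_one_mul, mul_geom_sum, hw, sub_self]
  rw [spectralProj, inv_smul_smul₀ hω0, smul_mul_assoc, mul_smul_comm, hgeom, smul_comm]

theorem sum_spectralProj (hω : IsPrimitiveRoot ω n) (hn : n ≠ 0) (z : A) :
    ∑ m ∈ range n, spectralProj ω n z m = 1 := by
  have hroots : ∀ k ∈ range n, ∑ m ∈ range n, ((ω ^ m)⁻¹) ^ k = if 0 = k then (n : K) else 0 := by
    intro k hk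
    rw [← hω.sum_range_pow_mul_inv_pow (Nat.pos_of_ne_zero hn) (mem_range.1 hk)]
    refine sum_congr rfl fun m _ => ?_
    rw [pow_zero, one_mul, inv_pow, inv_pow, ← pow_mul, ← pow_mul, mul_comm]
  have hn' : (n : K) ≠ 0 := by
    have : NeZero n := ⟨hn⟩
    exact hω.neZero'.out
  simp only [spectralProj, ← smul_sum, smul_pow]
  rw [sum_comm]
  simp only [← sum_smul]
  rw [sum_congr rfl fun k hk => congrArg (· • z ^ k) (hroots k hk)]
  simp only [ite_smul, zero_smul, sum_ite_eq, mem_range, Nat.pos_of_ne_zero hn, if_true, pow_zero,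
    smul_smul, inv_mul_cancel₀ hn', one_smul]

section LocalModel

variable {x y x' : A}

theorem spectralProj_mul_pow_mul_spectralProj_action_left (hω : IsPrimitiveRoot ω n)
    (hn : n ≠ 0) (hxy : x * y = ω • (y * x)) (hxx' : Commute x x') (hx : x ^ n = 1)
    (m l j : ℕ) :
    let P := spectralProj ω n x m * y ^ l * spectralProj ω n x' j
    x * P = ω ^ m • P ∧ P * x = (ω ^ m * (ω ^ l)⁻¹) • P := by
  intro P
  set E := spectralProj ω n x m
  set E' := spectralProj ω n x' j
  have hxE : x * E = ω ^ m • E := mul_spectralProj hω hn hx m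
  have hEx : E * x = ω ^ m • E := by
    rw [← hxE]; exact ((Commute.refl x).spectralProj_right m).eq.symm
  have hxE' : Commute x E' := hxx'.spectralProj_right j
  have hyx : y ^ l * x = (ω ^ l)⁻¹ • (x * y ^ l) := by
    rw [mul_pow_eq_smul_pow_mul hxy, inv_smul_smul₀ (pow_ne_zero l (hω.ne_zero hn))]
  constructor
  · rw [← mul_assoc, ← mul_assoc, hxE, smul_mul_assoc, smul_mul_assoc]
  · calc E * y ^ l * E' * x = E * (y ^ l * x) * E' := by
          rw [mul_assoc _ E', ← hxE'.eq]; simp only [mul_assoc]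
      _ = (ω ^ l)⁻¹ • (E * x * y ^ l * E') := by
          rw [hyx, mul_smul_comm, smul_mul_assoc]; simp only [mul_assoc]
      _ = _ := by rw [hEx, smul_mul_assoc, smul_mul_assoc, smul_smul, mul_comm]

theorem spectralProj_mul_pow_mul_spectralProj_action_right (hω : IsPrimitiveRoot ω n)
    (hn : n ≠ 0) (hyx' : y * x' = ω • (x' * y)) (hxx' : Commute x x') (hx' : x' ^ n = 1)
    (m l j : ℕ) :
    let P := spectralProj ω n x m * y ^ l * spectralProj ω n x' j
    x' * P = (ω ^ j * (ω ^ l)⁻¹) • P ∧ P * x' = ω ^ j • P := by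
  intro P
  set E := spectralProj ω n x m
  set E' := spectralProj ω n x' j
  have hx'E' : x' * E' = ω ^ j • E' := mul_spectralProj hω hn hx' j
  have hE'x' : E' * x' = ω ^ j • E' := by
    rw [← hx'E']; exact ((Commute.refl x').spectralProj_right j).eq.symm
  have hx'E : Commute x' E := hxx'.symm.spectralProj_right m
  have hx'y : x' * y ^ l = (ω ^ l)⁻¹ • (y ^ l * x') := by
    rw [pow_mul_eq_smul_mul_pow hyx', inv_smul_smul₀ (pow_ne_zero l (hω.ne_zero hn))]
  constructor
  · calc x' * (E * y ^ l * E') = E * (x' * y ^ l) * E' := by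
          rw [← mul_assoc, ← mul_assoc, hx'E.eq]; simp only [mul_assoc]
      _ = (ω ^ l)⁻¹ • (E * y ^ l * (x' * E')) := by
          rw [hx'y, mul_smul_comm, smul_mul_assoc]; simp only [mul_assoc]
      _ = _ := by rw [hx'E', mul_smul_comm, smul_smul, mul_comm]
  · rw [mul_assoc _ E', hE'x', mul_smul_comm]

theorem lie_chiralPotts_add_spectralProj_mul (hω : IsPrimitiveRoot ω n) (hn : n ≠ 0)
    (hxy : x * y = ω • (y * x)) (hyx' : y * x' = ω • (x' * y)) (hxx' : Commute x x')
    (hx : x ^ n = 1) (hx' : x' ^ n = 1) {m l j : ℕ} (hm : m < n) (hl : l ≤ n) (hj : j < n) :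
    ⁅chiralPotts ω n x + chiralPotts ω n x',
        spectralProj ω n x m * y ^ l * spectralProj ω n x' j⁆ =
      ((n : K) * ((if m < l then 1 else 0) - (if j < l then 1 else 0))) •
        (spectralProj ω n x m * y ^ l * spectralProj ω n x' j) := by
  obtain ⟨hxP, hPx⟩ := spectralProj_mul_pow_mul_spectralProj_action_left hω hn hxy hxx' hx m l j
  obtain ⟨hx'P, hPx'⟩ :=
    spectralProj_mul_pow_mul_spectralProj_action_right hω hn hyx' hxx' hx' m l j
  rw [add_lie, lie_chiralPotts_eq_smul hxP hPx, lie_chiralPotts_eq_smul hx'P hPx', ← add_smul,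
    hω.chiralPotts_sub hm hl, ← neg_sub (chiralPotts ω n (ω ^ j)), hω.chiralPotts_sub hj hl]
  congr 1
  split_ifs <;> ring

end LocalModel

theorem dolanGradyRel_chiralPotts (hω : IsPrimitiveRoot ω n) (hn : n ≠ 0) {x y x' : A}
    (hxy : x * y = ω • (y * x)) (hyx' : y * x' = ω • (x' * y)) (hxx' : Commute x x')
    (hx : x ^ n = 1) (hx' : x' ^ n = 1) :
    DolanGradyRel ((n : K) ^ 2) (chiralPotts ω n x + chiralPotts ω n x') (chiralPotts ω n y) := by
  have hy : ∀ l, y ^ l = ∑ m ∈ range n, ∑ j ∈ range n,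
      spectralProj ω n x m * y ^ l * spectralProj ω n x' j := fun l => by
    simp only [← mul_sum, ← sum_mul, sum_spectralProj hω hn, one_mul, mul_one]
  refine DolanGradyRel.sum fun l hl => ?_
  rw [hy]
  refine (DolanGradyRel.sum fun m hm => DolanGradyRel.sum fun j hj => ?_).smul _
  refine DolanGradyRel.of_lie_eq_smul (lie_chiralPotts_add_spectralProj_mul hω hn hxy hyx' hxx'
    hx hx' (mem_range.1 hm) (by grind) (mem_range.1 hj)) ?_
  split_ifs <;> ring

section ParityClass

variable {N : ℕ}

def parityClass (N : ℕ) (c : ZMod (2 * N)) : Finset (ZMod (2 * N)) :=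
  (range N).image fun j : ℕ => 2 * (j : ZMod (2 * N)) + c

theorem two_mul_add_mem_parityClass [NeZero N] (a c : ZMod (2 * N)) :
    2 * a + c ∈ parityClass N c := by
  refine mem_image.2 ⟨a.val % N, mem_range.2 (Nat.mod_lt _ (NeZero.pos N)), ?_⟩
  have h : ((2 * (a.val % N) : ℕ) : ZMod (2 * N)) = 2 * a := by
    rw [← Nat.mul_mod_mul_left, ZMod.natCast_mod, Nat.cast_mul, ZMod.natCast_zmod_val,
      Nat.cast_ofNat]
  rw [← h, Nat.cast_mul, Nat.cast_ofNat]

theorem sum_range_eq_sum_parityClass {M : Type*} [AddCommMonoid M] (f : ZMod (2 * N) → M)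
    (c : ZMod (2 * N)) :
    ∑ j ∈ range N, f (2 * (j : ZMod (2 * N)) + c) = ∑ s ∈ parityClass N c, f s := by
  refine (sum_image fun j hj j' hj' h => ?_).symm
  have h' : ((2 * j : ℕ) : ZMod (2 * N)) = ((2 * j' : ℕ) : ZMod (2 * N)) := by
    push_cast; exact add_right_cancel h
  rw [ZMod.natCast_eq_natCast_iff', Nat.mod_eq_of_lt, Nat.mod_eq_of_lt] at h' <;>
    grind

theorem two_mul_add_ne_two_mul_add_add_one (a b c : ZMod (2 * N)) : 2 * a + c ≠ 2 * b + c + 1 := by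
  intro h
  have h2 := congrArg (ZMod.castHom (dvd_mul_right 2 N) (ZMod 2)) h
  simp only [map_add, map_mul, map_one, map_ofNat] at h2
  rw [show (2 : ZMod 2) = 0 from rfl] at h2
  simp at h2

theorem two_ne_zero_of_two_le (hN : 2 ≤ N) : (2 : ZMod (2 * N)) ≠ 0 := by
  intro h
  have h' : ((2 : ℕ) : ZMod (2 * N)) = 0 := by exact_mod_cast h
  rw [ZMod.natCast_eq_zero_iff] at h'
  have := Nat.le_of_dvd two_pos h'
  omega

end ParityClass

theorem dolanGradyRel_sum_parityClass {N : ℕ} (hω : IsPrimitiveRoot ω n) (hn : n ≠ 0)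
    (hN : 2 ≤ N) (η : ZMod (2 * N) → A)
    (hanti : ∀ j : ZMod (2 * N), η j * η (j + 1) = ω • (η (j + 1) * η j))
    (hcomm : ∀ j l : ZMod (2 * N), l ≠ j + 1 → l ≠ j - 1 → η j * η l = η l * η j)
    (hpow : ∀ j : ZMod (2 * N), η j ^ n = 1) (c d : ZMod (2 * N)) :
    DolanGradyRel ((n : K) ^ 2) (∑ s ∈ parityClass N c, chiralPotts ω n (η s))
      (∑ s ∈ parityClass N (2 * d + c + 1), chiralPotts ω n (η s)) := by
  have : NeZero N := ⟨by omega⟩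
  have hodd := two_mul_add_ne_two_mul_add_add_one (N := N)
  have hcomm' : ∀ j l, l ≠ j + 1 → l ≠ j - 1 →
      Commute (chiralPotts ω n (η j)) (chiralPotts ω n (η l)) := fun j l h₁ h₂ =>
    Commute.chiralPotts (hcomm j l h₁ h₂)
  refine DolanGradyRel.sum fun t ht => ?_
  obtain ⟨p, -, rfl⟩ := mem_image.1 ht
  rw [show 2 * (p : ZMod (2 * N)) + (2 * d + c + 1) = 2 * (p + d) + c + 1 by ring]
  generalize (p : ZMod (2 * N)) + d = a
  have hsucc : 2 * a + c + 1 + 1 = 2 * (a + 1) + c := by ring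
  refine DolanGradyRel.sum_of_commute (two_mul_add_mem_parityClass a c)
    (two_mul_add_mem_parityClass (a + 1) c)
    (fun h => two_ne_zero_of_two_le hN (by linear_combination -h)) ?_ ?_ ?_
  · intro k hk k' hk'
    obtain ⟨j, -, rfl⟩ := mem_image.1 hk
    obtain ⟨j', -, rfl⟩ := mem_image.1 hk'
    exact hcomm' _ _ (hodd j' j c) fun h => hodd j j' c (by linear_combination -h)
  · intro k _ hk₁ hk₂
    exact (hcomm' _ k (fun h => hk₂ (h.trans hsucc)) fun h => hk₁ (h.trans (by ring))).symm
  · exact dolanGradyRel_chiralPotts hω hn (hanti _) (hsucc ▸ hanti _) (hcomm _ _ (hodd _ _ c)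
      fun h => hodd a (a + 1) c (by linear_combination -h)) (hpow _) (hpow _)

end

/-- Theorem 3 of the paper.
Let `n ≥ 2`, `ω = exp(2πi/n)`, and let `η_j` (indexed cyclically mod `2N`, `N ≥ 2`)
satisfy `η_j η_{j+1} = ω η_{j+1} η_j`, `η_j η_k = η_k η_j` for `k ≢ j ± 1 (mod 2N)`,
and `η_j^n = 1`.  Then
`A₀ = Σ_{j=1}^{N} Σ_{k=1}^{n−1} η_{2j−1}^k / (1 − ω^{−k})` and
`A₁ = Σ_{j=1}^{N} Σ_{k=1}^{n−1} η_{2j}^k / (1 − ω^{−k})` satisfy the Dolan–Grady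
condition with constant `C = n²`. -/
theorem dolan_grady_superintegrable_chiral_potts
    (n : ℕ) (hn : 2 ≤ n)
    (N : ℕ) (hN : 2 ≤ N) (A : Type*) [Ring A] [Algebra ℂ A]
    (ω : ℂ) (hω : ω = Complex.exp (2 * Real.pi * Complex.I / n))
    (η : ZMod (2 * N) → A)
    (hanti : ∀ j : ZMod (2 * N), η j * η (j + 1) = ω • (η (j + 1) * η j))
    (hcomm : ∀ j l : ZMod (2 * N), l ≠ j + 1 → l ≠ j - 1 → η j * η l = η l * η j)
    (hpow : ∀ j : ZMod (2 * N), η j ^ n = 1)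
    (A₀ A₁ : A)
    (hA₀ : A₀ = ∑ j ∈ Finset.range N, ∑ k ∈ Finset.Icc 1 (n - 1),
      (1 - (ω ^ k)⁻¹)⁻¹ • η (2 * (j : ZMod (2 * N)) + 1) ^ k)
    (hA₁ : A₁ = ∑ j ∈ Finset.range N, ∑ k ∈ Finset.Icc 1 (n - 1),
      (1 - (ω ^ k)⁻¹)⁻¹ • η (2 * (j : ZMod (2 * N)) + 2) ^ k) :
    ⁅A₀, ⁅A₀, ⁅A₀, A₁⁆⁆⁆ = ((n : ℂ) ^ 2) • ⁅A₀, A₁⁆ ∧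
    ⁅A₁, ⁅A₁, ⁅A₁, A₀⁆⁆⁆ = ((n : ℂ) ^ 2) • ⁅A₁, A₀⁆ := by
  have hprim : IsPrimitiveRoot ω n := hω ▸ Complex.isPrimitiveRoot_exp n (by omega)
  have hA₀' : A₀ = ∑ s ∈ parityClass N 1, chiralPotts ω n (η s) :=
    hA₀.trans (sum_range_eq_sum_parityClass (fun s => chiralPotts ω n (η s)) 1)
  have hA₁' : A₁ = ∑ s ∈ parityClass N 2, chiralPotts ω n (η s) :=
    hA₁.trans (sum_range_eq_sum_parityClass (fun s => chiralPotts ω n (η s)) 2)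
  have hodd_even := dolanGradyRel_sum_parityClass hprim (by omega) hN η hanti hcomm hpow 1 0
  have heven_odd := dolanGradyRel_sum_parityClass hprim (by omega) hN η hanti hcomm hpow 2 (-1)
  rw [mul_zero, zero_add, one_add_one_eq_two, ← hA₀', ← hA₁'] at hodd_even
  rw [show 2 * (-1) + 2 + 1 = (1 : ZMod (2 * N)) by ring, ← hA₀', ← hA₁'] at heven_odd
  exact ⟨hodd_even, heven_odd⟩
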